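/- The seven vector fields on C^5 (coordinates x,y,u,p,q): X_1 = ∂_x, H_1 = −2x∂_x + ∂_u + 2p∂_p, Y_1 = −x²∂_x + x∂_u + (1+2xp)∂_p, X_2 = ∂_y, H_2 = −2y∂_y + (1/λ)∂_u + 2q∂_q, Y_2 = −y²∂_y + (1/λ)y∂_u + ((1/λ)+2yq)∂_q, Z = ∂_u (λ ≠ 0) satisfy the bracket relations [X_1,H_1] = −2X_1, [H_1,Y_1] = −2Y_1, [X_1,Y_1] = H_1, [X_2,H_2] = −2X_2, [H_2,Y_2] = −2Y_2, [X_2,Y_2] = H_2, all brackets between the two triples vanish, and Z is central. Hence they span a Lie algebra isomorphic to sl_2(C) × sl_2(C) × C. -/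

import Mathlib

/-- Lie bracket of vector fields on `ℂ^5`, `[V,W] = DW·V − DV·W`. -/
noncomputable def lieVF (V W : (Fin 5 → ℂ) → Fin 5 → ℂ) : (Fin 5 → ℂ) → Fin 5 → ℂ :=
  fun z => fderiv ℂ W z (V z) - fderiv ℂ V z (W z)

-- Coordinates on ℂ^5: (x, y, u, p, q) = (z 0, z 1, z 2, z 3, z 4).
noncomputable def X1 : (Fin 5 → ℂ) → Fin 5 → ℂ := fun _ => ![1, 0, 0, 0, 0]
noncomputable def H1 : (Fin 5 → ℂ) → Fin 5 → ℂ := fun z => ![-2 * z 0, 0, 1, 2 * z 3, 0]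
noncomputable def Y1 : (Fin 5 → ℂ) → Fin 5 → ℂ :=
  fun z => ![-(z 0) ^ 2, 0, z 0, 1 + 2 * z 0 * z 3, 0]
noncomputable def X2 : (Fin 5 → ℂ) → Fin 5 → ℂ := fun _ => ![0, 1, 0, 0, 0]
noncomputable def H2 (lam : ℂ) : (Fin 5 → ℂ) → Fin 5 → ℂ :=
  fun z => ![0, -2 * z 1, 1 / lam, 0, 2 * z 4]
noncomputable def Y2 (lam : ℂ) : (Fin 5 → ℂ) → Fin 5 → ℂ :=
  fun z => ![0, -(z 1) ^ 2, (1 / lam) * z 1, 0, 1 / lam + 2 * z 1 * z 4]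
noncomputable def Zc : (Fin 5 → ℂ) → Fin 5 → ℂ := fun _ => ![0, 0, 1, 0, 0]

/-!
All brackets are read off from the Jacobians of the fields, which are explicit since every
coefficient is a polynomial of degree at most two. For linear independence, a vanishing
combination evaluated at the origin kills the coefficients of `X₁, Y₁, X₂, Y₂`, and evaluated at
the first two unit vectors it kills those of `H₁, H₂`; the coefficient of `Z` is then forced.
-/

section Jacobian

variable {𝕜 ι E F : Type*} [NontriviallyNormedField 𝕜]
  [NormedAddCommGroup E] [NormedSpace 𝕜 E] [NormedAddCommGroup F] [NormedSpace 𝕜 F]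

theorem fderiv_apply_apply (i : ι) (z v : ι → F) :
    fderiv 𝕜 (fun x : ι → F => x i) z v = v i := by
  rw [(hasFDerivAt_apply i z).fderiv]
  rfl

theorem fderiv_apply_eq_fderiv_comp_apply {V : E → ι → F} {z : E}
    (hV : DifferentiableAt 𝕜 V z) (w : E) (i : ι) :
    fderiv 𝕜 V z w i = fderiv 𝕜 (fun x => V x i) z w := by
  rw [fderiv_apply hV]
  rfl

end Jacobian

theorem fderiv_X1 (z : Fin 5 → ℂ) : fderiv ℂ X1 z = 0 := fderiv_const_apply _

theorem fderiv_X2 (z : Fin 5 → ℂ) : fderiv ℂ X2 z = 0 := fderiv_const_apply _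

theorem fderiv_Zc (z : Fin 5 → ℂ) : fderiv ℂ Zc z = 0 := fderiv_const_apply _

-- `fun_prop` does not see through `![…]`, so the tuple is split with `Differentiable.finCons`.
theorem differentiable_H1 : Differentiable ℂ H1 := by
  unfold H1
  repeat (first | fun_prop | refine Differentiable.finCons ?_ ?_)

theorem differentiable_Y1 : Differentiable ℂ Y1 := by
  unfold Y1
  repeat (first | fun_prop | refine Differentiable.finCons ?_ ?_)

theorem differentiable_H2 (lam : ℂ) : Differentiable ℂ (H2 lam) := by
  unfold H2
  repeat (first | fun_prop | refine Differentiable.finCons ?_ ?_)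

theorem differentiable_Y2 (lam : ℂ) : Differentiable ℂ (Y2 lam) := by
  unfold Y2
  repeat (first | fun_prop | refine Differentiable.finCons ?_ ?_)

theorem fderiv_H1 (z w : Fin 5 → ℂ) :
    fderiv ℂ H1 z w = ![-2 * w 0, 0, 0, 2 * w 3, 0] := by
  ext i
  rw [fderiv_apply_eq_fderiv_comp_apply (differentiable_H1 z)]
  fin_cases i <;> simp (disch := fun_prop) [H1, fderiv_const_mul, fderiv_apply_apply]

theorem fderiv_Y1 (z w : Fin 5 → ℂ) :
    fderiv ℂ Y1 z w = ![-2 * z 0 * w 0, 0, w 0, 2 * z 3 * w 0 + 2 * z 0 * w 3, 0] := by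
  ext i
  rw [fderiv_apply_eq_fderiv_comp_apply (differentiable_Y1 z)]
  fin_cases i <;>
    simp (disch := fun_prop) [Y1, fderiv_fun_pow, fderiv_fun_mul, fderiv_apply_apply]
  all_goals ring

theorem fderiv_H2 (lam : ℂ) (z w : Fin 5 → ℂ) :
    fderiv ℂ (H2 lam) z w = ![0, -2 * w 1, 0, 0, 2 * w 4] := by
  ext i
  rw [fderiv_apply_eq_fderiv_comp_apply (differentiable_H2 lam z)]
  fin_cases i <;> simp (disch := fun_prop) [H2, fderiv_const_mul, fderiv_apply_apply]

theorem fderiv_Y2 (lam : ℂ) (z w : Fin 5 → ℂ) :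
    fderiv ℂ (Y2 lam) z w =
      ![0, -2 * z 1 * w 1, (1 / lam) * w 1, 0, 2 * z 4 * w 1 + 2 * z 1 * w 4] := by
  ext i
  rw [fderiv_apply_eq_fderiv_comp_apply (differentiable_Y2 lam z)]
  fin_cases i <;>
    simp (disch := fun_prop) [Y2, fderiv_fun_pow, fderiv_fun_mul, fderiv_apply_apply]
  all_goals ring

theorem sl2_relations_X1_H1_Y1 :
    lieVF X1 H1 = (-2 : ℂ) • X1 ∧ lieVF H1 Y1 = (-2 : ℂ) • Y1 ∧ lieVF X1 Y1 = H1 := by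
  refine ⟨?_, ?_, ?_⟩ <;> ext z i <;>
    simp only [lieVF, fderiv_X1, fderiv_H1, fderiv_Y1, X1, H1, Y1, Pi.smul_apply] <;>
    fin_cases i <;> simp <;> ring

theorem sl2_relations_X2_H2_Y2 (lam : ℂ) :
    lieVF X2 (H2 lam) = (-2 : ℂ) • X2 ∧ lieVF (H2 lam) (Y2 lam) = (-2 : ℂ) • Y2 lam ∧
      lieVF X2 (Y2 lam) = H2 lam := by
  refine ⟨?_, ?_, ?_⟩ <;> ext z i <;>
    simp only [lieVF, fderiv_X2, fderiv_H2, fderiv_Y2, X2, H2, Y2, Pi.smul_apply] <;>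
    fin_cases i <;> simp <;> ring

theorem lieVF_X1_H1_Y1_X2_H2_Y2_eq_zero (lam : ℂ) :
    lieVF X1 X2 = 0 ∧ lieVF X1 (H2 lam) = 0 ∧ lieVF X1 (Y2 lam) = 0 ∧
    lieVF H1 X2 = 0 ∧ lieVF H1 (H2 lam) = 0 ∧ lieVF H1 (Y2 lam) = 0 ∧
    lieVF Y1 X2 = 0 ∧ lieVF Y1 (H2 lam) = 0 ∧ lieVF Y1 (Y2 lam) = 0 := by
  refine ⟨?_, ?_, ?_, ?_, ?_, ?_, ?_, ?_, ?_⟩ <;> ext z i <;>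
    simp only [lieVF, fderiv_X1, fderiv_H1, fderiv_Y1, fderiv_X2, fderiv_H2, fderiv_Y2,
      X1, H1, Y1, X2, H2, Y2, Pi.zero_apply] <;>
    fin_cases i <;> simp

theorem lieVF_Zc_eq_zero (lam : ℂ) :
    lieVF Zc X1 = 0 ∧ lieVF Zc H1 = 0 ∧ lieVF Zc Y1 = 0 ∧
    lieVF Zc X2 = 0 ∧ lieVF Zc (H2 lam) = 0 ∧ lieVF Zc (Y2 lam) = 0 := by
  refine ⟨?_, ?_, ?_, ?_, ?_, ?_⟩ <;> ext z i <;>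
    simp only [lieVF, fderiv_Zc, fderiv_X1, fderiv_H1, fderiv_Y1, fderiv_X2, fderiv_H2,
      fderiv_Y2, Zc, X1, H1, Y1, X2, H2, Y2, Pi.zero_apply] <;>
    fin_cases i <;> simp

theorem linearIndependent_X1_H1_Y1_X2_H2_Y2_Zc {lam : ℂ} (hlam : lam ≠ 0) :
    LinearIndependent ℂ ![X1, H1, Y1, X2, H2 lam, Y2 lam, Zc] := by
  rw [Fintype.linearIndependent_iff]
  intro g hg
  have ev : ∀ z j, g 0 * X1 z j + g 1 * H1 z j + g 2 * Y1 z j + g 3 * X2 z j +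
      g 4 * H2 lam z j + g 5 * Y2 lam z j + g 6 * Zc z j = 0 := fun z j => by
    simpa [Fin.sum_univ_seven, mul_comm] using congrFun (congrFun hg z) j
  have h0 := ev 0 0
  have h1 := ev 0 1
  have h2 := ev 0 2
  have h3 := ev 0 3
  have h4 := ev 0 4
  have he0 := ev (Pi.single 0 1) 0
  have he1 := ev (Pi.single 1 1) 1
  simp only [Fin.isValue, X1, Matrix.cons_val_zero, mul_one, H1, Pi.zero_apply, mul_zero, add_zero,
    Y1, ne_eq, OfNat.ofNat_ne_zero, not_false_eq_true, zero_pow, neg_zero, X2, H2, one_div, Y2, Zc,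
    Matrix.cons_val_one, zero_add, Matrix.cons_val, mul_eq_zero, inv_eq_zero, hlam, or_false,
    Pi.single_eq_same, Fin.reduceEq, Pi.single_eq_of_ne, mul_neg, one_pow, one_ne_zero,
    zero_ne_one] at h0 h1 h2 h3 h4 he0 he1
  have hg1 : g 1 = 0 := by linear_combination (h0 - h3 - he0) / 2
  have hg4 : g 4 = 0 := by linear_combination (h1 - h4 - he1) / 2
  have hg6 : g 6 = 0 := by linear_combination h2 - hg1 - lam⁻¹ * hg4
  intro i
  fin_cases i <;> assumption

/-- **The symmetry algebra of the model D.7 is `sl₂(ℂ) × sl₂(ℂ) × ℂ`:** for `λ ≠ 0` the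
seven vector fields `X₁, H₁, Y₁, X₂, H₂, Y₂, Z` are linearly independent and satisfy
`[X_i,H_i] = −2X_i`, `[H_i,Y_i] = −2Y_i`, `[X_i,Y_i] = H_i`, all brackets between the two
triples vanish, and `Z` is central. -/
theorem D7_symmetry_algebra (lam : ℂ) (hlam : lam ≠ 0) :
    lieVF X1 H1 = (-2 : ℂ) • X1 ∧ lieVF H1 Y1 = (-2 : ℂ) • Y1 ∧ lieVF X1 Y1 = H1 ∧
    lieVF X2 (H2 lam) = (-2 : ℂ) • X2 ∧ lieVF (H2 lam) (Y2 lam) = (-2 : ℂ) • Y2 lam ∧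
    lieVF X2 (Y2 lam) = H2 lam ∧
    lieVF X1 X2 = 0 ∧ lieVF X1 (H2 lam) = 0 ∧ lieVF X1 (Y2 lam) = 0 ∧
    lieVF H1 X2 = 0 ∧ lieVF H1 (H2 lam) = 0 ∧ lieVF H1 (Y2 lam) = 0 ∧
    lieVF Y1 X2 = 0 ∧ lieVF Y1 (H2 lam) = 0 ∧ lieVF Y1 (Y2 lam) = 0 ∧
    lieVF Zc X1 = 0 ∧ lieVF Zc H1 = 0 ∧ lieVF Zc Y1 = 0 ∧
    lieVF Zc X2 = 0 ∧ lieVF Zc (H2 lam) = 0 ∧ lieVF Zc (Y2 lam) = 0 ∧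
    LinearIndependent ℂ ![X1, H1, Y1, X2, H2 lam, Y2 lam, Zc] := by
  obtain ⟨h₁, h₂, h₃⟩ := sl2_relations_X1_H1_Y1
  obtain ⟨h₄, h₅, h₆⟩ := sl2_relations_X2_H2_Y2 lam
  obtain ⟨c₁, c₂, c₃, c₄, c₅, c₆, c₇, c₈, c₉⟩ := lieVF_X1_H1_Y1_X2_H2_Y2_eq_zero lam
  obtain ⟨z₁, z₂, z₃, z₄, z₅, z₆⟩ := lieVF_Zc_eq_zero lam
  exact ⟨h₁, h₂, h₃, h₄, h₅, h₆, c₁, c₂, c₃, c₄, c₅, c₆, c₇, c₈, c₉, z₁, z₂, z₃, z₄, z₅, z₆,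
    linearIndependent_X1_H1_Y1_X2_H2_Y2_Zc hlam⟩
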